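/- arXiv:1803.06521 — 2 statements merged into one kernel-verified Lean document; each statement's English description precedes it below -/
import Mathlib

section
/- Let 1 ≤ m ≤ n and let A : {0,1}^m → ℝ be a probability density (A ≥ 0, Σ_x A(x) = 1) satisfying E_A[x_S] = 2^{−|S|} for every S ⊆ [m] with |S| < m. Then for any two distinct subsets I, J ⊆ [n] with |I| = |J| = m, Σ_{x ∈ {0,1}^n} D_I(x) · D_J(x) = 2^{−n}; equivalently, the pairwise correlation χ_{U_n}(D_I, D_J) := −1 + Σ_x D_I(x)D_J(x)/U_n(x) relative to the uniform distribution U_n on {0,1}^n is 0. -/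
/-- The `S`-moment `E_A[x_S]` of a function `A` on `{0,1}^m`. -/
noncomputable def momentOf {m : ℕ} (A : (Fin m → Bool) → ℝ) (S : Finset (Fin m)) : ℝ :=
  ∑ x ∈ Finset.univ.filter (fun x : Fin m → Bool => ∀ i ∈ S, x i = true), A x

/-- The density `D_I` on `{0,1}^n` obtained by placing `A` on the coordinates `I` (listed in
increasing order) and the uniform distribution on the remaining coordinates:
`D_I(x) = A(x_I) · 2^{-(n-m)}`. -/
noncomputable def embedDensity {n m : ℕ} (A : (Fin m → Bool) → ℝ)
    (I : Finset (Fin n)) (hI : I.card = m) : (Fin n → Bool) → ℝ :=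
  fun x => A (fun t => x (I.orderIsoOfFin hI t).1) * (1/2 : ℝ) ^ (n - m)

noncomputable def sgnP {ι : Type*} (K : Finset ι) (x : ι → Bool) : ℝ :=
  ∏ i ∈ K, (if x i then (-1:ℝ) else 1)

lemma sgnP_update {ι : Type*} [DecidableEq ι] (K : Finset ι) (x : ι → Bool) {j : ι}
    (hj : j ∈ K) : sgnP K (Function.update x j (!x j)) = - sgnP K x := by
  unfold sgnP
  rw [← Finset.prod_erase_mul _ _ hj, ← Finset.prod_erase_mul _ _ hj]
  have h1 : ∀ i ∈ K.erase j,
      (if Function.update x j (!x j) i then (-1:ℝ) else 1) = (if x i then (-1:ℝ) else 1) := by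
    intro i hi
    rw [Function.update_of_ne (Finset.ne_of_mem_erase hi)]
  rw [Finset.prod_congr rfl h1, Function.update_self]
  cases h : x j <;> simp [h]

lemma sgnP_mul_self {ι : Type*} (K : Finset ι) (x : ι → Bool) : sgnP K x * sgnP K x = 1 := by
  unfold sgnP
  rw [← Finset.prod_mul_distrib]
  apply Finset.prod_eq_one
  intro i _
  cases h : x i <;> simp [h]

lemma sgnP_union {ι : Type*} [DecidableEq ι] {K L : Finset ι} (h : Disjoint K L) (x : ι → Bool) :
    sgnP (K ∪ L) x = sgnP K x * sgnP L x := Finset.prod_union h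

lemma sgnP_symmDiff {ι : Type*} [DecidableEq ι] (I J : Finset ι) (x : ι → Bool) :
    sgnP I x * sgnP J x = sgnP (symmDiff I J) x := by
  have h1 : sgnP I x * sgnP J x = sgnP (I ∪ J) x * sgnP (I ∩ J) x :=
    (Finset.prod_union_inter).symm
  have h2 : I ∪ J = (symmDiff I J) ∪ (I ∩ J) := by
    ext a; simp [Finset.mem_symmDiff]; tauto
  have h3 : Disjoint (symmDiff I J) (I ∩ J) := by
    rw [Finset.disjoint_left]; intro a ha hb
    rw [Finset.mem_symmDiff] at ha; simp at hb; tauto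
  rw [h2, sgnP_union h3] at h1
  rw [h1, mul_assoc, sgnP_mul_self, mul_one]

lemma update_flip_invol {n : ℕ} (j : Fin n) (x : Fin n → Bool) :
    Function.update (Function.update x j (!x j)) j (!(Function.update x j (!x j)) j) = x := by
  funext i
  by_cases hij : i = j
  · subst hij; simp
  · simp [Function.update_of_ne hij]

lemma sum_sgnP_zero {n : ℕ} {K : Finset (Fin n)} (hK : K.Nonempty) :
    ∑ x : Fin n → Bool, sgnP K x = 0 := by
  obtain ⟨j, hj⟩ := hK
  apply Finset.sum_ninvolution (fun x => Function.update x j (!x j))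
  · intro x
    rw [sgnP_update K x hj]; ring
  · intro x _ h
    have := congrFun h j
    simp at this
  · intro x; exact Finset.mem_univ _
  · intro x; exact update_flip_invol j x

lemma genMoment {m : ℕ} (A : (Fin m → Bool) → ℝ)
    (hA : ∀ S : Finset (Fin m), S.card < m → momentOf A S = (1/2:ℝ)^S.card) :
    ∀ (S₀ S₁ : Finset (Fin m)), Disjoint S₁ S₀ → (S₁ ∪ S₀).card < m →
      ∑ x ∈ Finset.univ.filter
        (fun x : Fin m → Bool => (∀ i ∈ S₁, x i = true) ∧ (∀ i ∈ S₀, x i = false)), A x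
        = (1/2:ℝ)^(S₁ ∪ S₀).card := by
  intro S₀
  induction S₀ using Finset.induction with
  | empty =>
    intro S₁ _ hcard
    simp only [Finset.union_empty] at hcard ⊢
    rw [← hA S₁ hcard]
    unfold momentOf
    congr 1
    ext x; simp
  | @insert j s hjs ih =>
    intro S₁ hdisj hcard
    have hjS₁ : j ∉ S₁ := fun h => (Finset.disjoint_left.mp hdisj h) (Finset.mem_insert_self j s)
    have hdisj' : Disjoint S₁ s := hdisj.mono_right (Finset.subset_insert j s)
    have hju : j ∉ S₁ ∪ s := by simp [hjS₁, hjs]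
    have hcardeq : (S₁ ∪ insert j s).card = (S₁ ∪ s).card + 1 := by
      rw [Finset.union_insert, Finset.card_insert_of_notMem hju]
    have hcard1 : (S₁ ∪ s).card < m := by omega
    have hdisj2 : Disjoint (insert j S₁) s := by
      rw [Finset.disjoint_left]
      intro a ha has
      rcases Finset.mem_insert.mp ha with rfl | ha'
      · exact hjs has
      · exact (Finset.disjoint_left.mp hdisj' ha') has
    have hcard2 : ((insert j S₁) ∪ s).card < m := by
      rw [Finset.insert_union, Finset.card_insert_of_notMem hju]; omega
    have key := Finset.sum_filter_add_sum_filter_not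
      (Finset.univ.filter (fun x : Fin m → Bool => (∀ i ∈ S₁, x i = true) ∧ (∀ i ∈ s, x i = false)))
      (fun x => x j = true) A
    have e1 : (Finset.univ.filter
        (fun x : Fin m → Bool => (∀ i ∈ S₁, x i = true) ∧ (∀ i ∈ s, x i = false))).filter
        (fun x => x j = true)
        = Finset.univ.filter
        (fun x : Fin m → Bool => (∀ i ∈ insert j S₁, x i = true) ∧ (∀ i ∈ s, x i = false)) := by
      ext x; simp [Finset.forall_mem_insert]; tauto
    have e2 : (Finset.univ.filter
        (fun x : Fin m → Bool => (∀ i ∈ S₁, x i = true) ∧ (∀ i ∈ s, x i = false))).filter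
        (fun x => ¬ x j = true)
        = Finset.univ.filter
        (fun x : Fin m → Bool => (∀ i ∈ S₁, x i = true) ∧ (∀ i ∈ insert j s, x i = false)) := by
      ext x; simp [Finset.forall_mem_insert]; tauto
    rw [e1, e2, ih S₁ hdisj' hcard1, ih (insert j S₁) hdisj2 hcard2] at key
    rw [Finset.insert_union, Finset.card_insert_of_notMem hju] at key
    rw [hcardeq]
    have : ((1:ℝ)/2)^((S₁ ∪ s).card + 1) + (1/2:ℝ)^((S₁ ∪ s).card + 1) = (1/2:ℝ)^(S₁ ∪ s).card := by
      rw [pow_succ]; ring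
    linarith

lemma flip_sum {m : ℕ} (hm : 1 ≤ m) (A : (Fin m → Bool) → ℝ)
    (hA : ∀ S : Finset (Fin m), S.card < m → momentOf A S = (1/2:ℝ)^S.card)
    (y : Fin m → Bool) (j : Fin m) :
    A (Function.update y j true) + A (Function.update y j false) = 2 * (1/2:ℝ)^m := by
  classical
  set S₁ := Finset.univ.filter (fun i : Fin m => i ≠ j ∧ y i = true) with hS₁
  set S₀ := Finset.univ.filter (fun i : Fin m => i ≠ j ∧ y i = false) with hS₀
  have hdisj : Disjoint S₁ S₀ := by
    rw [Finset.disjoint_left]; intro a ha hb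
    simp [hS₁] at ha; simp [hS₀] at hb
    rw [ha.2] at hb; exact absurd hb.2 (by simp)
  have huni : S₁ ∪ S₀ = Finset.univ.erase j := by
    ext a
    simp [hS₁, hS₀, Finset.mem_erase]
    cases h : y a <;> tauto
  have hcard : (S₁ ∪ S₀).card = m - 1 := by
    rw [huni, Finset.card_erase_of_mem (Finset.mem_univ j), Finset.card_univ, Fintype.card_fin]
  have hlt : (S₁ ∪ S₀).card < m := by omega
  have key := genMoment A hA S₀ S₁ hdisj hlt
  have hset : Finset.univ.filter
      (fun x : Fin m → Bool => (∀ i ∈ S₁, x i = true) ∧ (∀ i ∈ S₀, x i = false))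
      = {Function.update y j true, Function.update y j false} := by
    ext z
    simp only [Finset.mem_filter, Finset.mem_univ, true_and, Finset.mem_insert,
      Finset.mem_singleton, hS₁, hS₀]
    constructor
    · rintro ⟨h1, h2⟩
      have hz : ∀ i, i ≠ j → z i = y i := by
        intro i hij
        cases h : y i with
        | true => exact h1 i (by simp [hij, h])
        | false => exact h2 i (by simp [hij, h])
      have : z = Function.update y j (z j) := by
        funext i
        by_cases hij : i = j
        · subst hij; simp
        · rw [Function.update_of_ne hij]; exact hz i hij
      cases hzj : z j
      · right; rw [this, hzj]
      · left; rw [this, hzj]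
    · rintro (rfl | rfl) <;>
        exact ⟨fun i hi => by simp at hi; rw [Function.update_of_ne hi.1, hi.2],
               fun i hi => by simp at hi; rw [Function.update_of_ne hi.1, hi.2]⟩
  have hne : Function.update y j true ≠ Function.update y j false := by
    intro h
    have := congrFun h j
    simp at this
  rw [hset, Finset.sum_pair hne, hcard] at key
  rw [key]
  conv_rhs => rw [show m = (m-1)+1 by omega]
  rw [pow_succ]
  ring

lemma structural {m : ℕ} (hm : 1 ≤ m) (A : (Fin m → Bool) → ℝ)
    (hA : ∀ S : Finset (Fin m), S.card < m → momentOf A S = (1/2:ℝ)^S.card)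
    (y : Fin m → Bool) :
    A y = (1/2:ℝ)^m
      + ((A (fun _ => true) - (1/2:ℝ)^m) * (-1:ℝ)^m) * sgnP Finset.univ y := by
  classical
  set c : ℝ := (A (fun _ => true) - (1/2:ℝ)^m) * (-1:ℝ)^m with hc
  suffices h : ∀ k (y : Fin m → Bool),
      (Finset.univ.filter (fun i => y i = false)).card = k →
      A y = (1/2:ℝ)^m + c * sgnP Finset.univ y from
    h _ y rfl
  intro k
  induction k with
  | zero =>
    intro y hy
    have hyt : y = fun _ => true := by
      funext i
      by_contra h
      have hyi : y i = false := by cases hb : y i; rfl; exact absurd hb h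
      have : i ∈ Finset.univ.filter (fun i => y i = false) := by simp [hyi]
      rw [Finset.card_eq_zero.mp hy] at this
      simp at this
    subst hyt
    have hs : sgnP (Finset.univ : Finset (Fin m)) (fun _ => true) = (-1:ℝ)^m := by
      unfold sgnP
      simp [Finset.prod_const, Finset.card_univ]
    rw [hs, hc]
    have hmm : ((-1:ℝ)^m) * ((-1:ℝ)^m) = 1 := by
      rw [← pow_add, ← two_mul, pow_mul]
      norm_num
    rw [mul_assoc, hmm, mul_one]
    ring
  | succ k ih =>
    intro y hy
    have hne : (Finset.univ.filter (fun i => y i = false)).Nonempty := by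
      rw [← Finset.card_pos, hy]; omega
    obtain ⟨j, hj⟩ := hne
    have hyj : y j = false := (Finset.mem_filter.mp hj).2
    set y' := Function.update y j true with hy'
    have hfilt : Finset.univ.filter (fun i => y' i = false)
        = (Finset.univ.filter (fun i => y i = false)).erase j := by
      ext i
      simp only [Finset.mem_filter, Finset.mem_univ, true_and, Finset.mem_erase, hy']
      by_cases hij : i = j
      · subst hij; simp
      · rw [Function.update_of_ne hij]; tauto
    have hcard' : (Finset.univ.filter (fun i => y' i = false)).card = k := by
      rw [hfilt, Finset.card_erase_of_mem hj, hy]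
      omega
    have hA' := ih y' hcard'
    have hflip := flip_sum hm A hA y j
    have hupf : Function.update y j false = y := by
      rw [← hyj]; exact Function.update_eq_self j y
    rw [hupf] at hflip
    have hsgn : sgnP Finset.univ y' = - sgnP Finset.univ y := by
      rw [hy', show (true : Bool) = !y j by rw [hyj]; rfl]
      exact sgnP_update _ _ (Finset.mem_univ j)
    rw [hsgn] at hA'
    have h2 : (2:ℝ) * (1/2:ℝ)^m - A y' = A y := by linarith
    rw [← h2, hA']
    ring

lemma sgnP_transfer {n m : ℕ} (I : Finset (Fin n)) (hI : I.card = m) (x : Fin n → Bool) :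
    sgnP Finset.univ (fun t => x (I.orderIsoOfFin hI t).1) = sgnP I x := by
  unfold sgnP
  rw [← Finset.prod_attach I (fun i => if x i then (-1:ℝ) else 1), ← Finset.univ_eq_attach]
  exact Equiv.prod_comp (I.orderIsoOfFin hI).toEquiv (fun a => if x a.1 then (-1:ℝ) else 1)

/-- if `A` matches the uniform distribution on all moments of degree `< m`,
then for distinct `I, J` of size `m`, `Σ_x D_I(x)·D_J(x) = 2^{-n}`, i.e. the pairwise
correlation of `D_I` and `D_J` relative to the uniform distribution is `0`. -/
theorem stmt_12 (n m : ℕ) (hm : 1 ≤ m) (hmn : m ≤ n)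
    (A : (Fin m → Bool) → ℝ) (hA0 : ∀ x, 0 ≤ A x) (hA1 : ∑ x, A x = 1)
    (hA : ∀ S : Finset (Fin m), S.card < m → momentOf A S = (1/2 : ℝ) ^ S.card)
    (I J : Finset (Fin n)) (hI : I.card = m) (hJ : J.card = m) (hIJ : I ≠ J) :
    ∑ x : Fin n → Bool, embedDensity A I hI x * embedDensity A J hJ x = (1/2 : ℝ) ^ n := by
  classical
  set a : ℝ := (1/2:ℝ)^m with ha
  set c : ℝ := (A (fun _ => true) - (1/2:ℝ)^m) * (-1:ℝ)^m with hc
  set w : ℝ := (1/2:ℝ)^(n-m) with hw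
  have hDI : ∀ x : Fin n → Bool, embedDensity A I hI x = (a + c * sgnP I x) * w := by
    intro x
    unfold embedDensity
    rw [structural hm A hA, sgnP_transfer I hI x]
  have hDJ : ∀ x : Fin n → Bool, embedDensity A J hJ x = (a + c * sgnP J x) * w := by
    intro x
    unfold embedDensity
    rw [structural hm A hA, sgnP_transfer J hJ x]
  have expand : ∀ x : Fin n → Bool,
      embedDensity A I hI x * embedDensity A J hJ x
      = a*a*w*w + (a*c*w*w) * sgnP I x + (a*c*w*w) * sgnP J x
        + (c*c*w*w) * sgnP (symmDiff I J) x := by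
    intro x
    rw [hDI x, hDJ x, ← sgnP_symmDiff]
    ring
  rw [Finset.sum_congr rfl (fun x _ => expand x)]
  have hIne : I.Nonempty := by rw [← Finset.card_pos, hI]; omega
  have hJne : J.Nonempty := by rw [← Finset.card_pos, hJ]; omega
  have hSDne : (symmDiff I J).Nonempty := by
    rw [Finset.nonempty_iff_ne_empty]
    intro h
    exact hIJ (symmDiff_eq_bot.mp h)
  have s2 : ∑ x : Fin n → Bool, (a*c*w*w) * sgnP I x = 0 := by
    rw [← Finset.mul_sum, sum_sgnP_zero hIne, mul_zero]
  have s3 : ∑ x : Fin n → Bool, (a*c*w*w) * sgnP J x = 0 := by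
    rw [← Finset.mul_sum, sum_sgnP_zero hJne, mul_zero]
  have s4 : ∑ x : Fin n → Bool, (c*c*w*w) * sgnP (symmDiff I J) x = 0 := by
    rw [← Finset.mul_sum, sum_sgnP_zero hSDne, mul_zero]
  rw [Finset.sum_add_distrib, Finset.sum_add_distrib, Finset.sum_add_distrib,
    s2, s3, s4, Finset.sum_const]
  simp only [add_zero, Finset.card_univ, nsmul_eq_mul]
  have hcard : (Fintype.card (Fin n → Bool) : ℝ) = 2^n := by
    rw [Fintype.card_fun]
    simp
  rw [hcard, ha, hw]
  have haw : (1/2:ℝ)^m * (1/2:ℝ)^(n-m) = (1/2:ℝ)^n := by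
    rw [← pow_add]
    congr 1
    omega
  have h2 : (2:ℝ)^n * (1/2:ℝ)^n = 1 := by
    rw [← mul_pow]
    norm_num
  calc (2:ℝ)^n * ((1/2:ℝ)^m * (1/2:ℝ)^m * (1/2:ℝ)^(n-m) * (1/2:ℝ)^(n-m))
      = ((1/2:ℝ)^m * (1/2:ℝ)^(n-m)) * ((1/2:ℝ)^m * (1/2:ℝ)^(n-m)) * (2:ℝ)^n := by ring
    _ = (1/2:ℝ)^n * ((2:ℝ)^n * (1/2:ℝ)^n) := by rw [haw]; ring
    _ = (1/2:ℝ)^n := by rw [h2, mul_one]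
end

section
/- Let 1 ≤ m ≤ n and let A : {0,1}^m → ℝ be a probability density (A ≥ 0, Σ_x A(x) = 1) satisfying E_A[x_S] = 2^{−|S|} for every S ⊆ [m] with |S| < m. Then for any I ⊆ [n] with |I| = m, Σ_{x ∈ {0,1}^n} D_I(x)² = 2^{−n} · (1 + δ(A)² · 4^m), where δ(A) := A(1,…,1) − 2^{−m}; equivalently, the chi-squared divergence χ²(D_I, U_n) := −1 + Σ_x D_I(x)²/U_n(x) equals δ(A)² · 4^m. -/
open Finset

private def suppF {m : ℕ} (y : Fin m → Bool) : Finset (Fin m) :=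
  Finset.univ.filter (fun i => y i = true)

private lemma suppF_inj {m : ℕ} {y x : Fin m → Bool} (h : suppF y = suppF x) : y = x := by
  funext i
  have := Finset.ext_iff.mp h i
  simp [suppF] at this
  cases hy : y i <;> cases hx : x i <;> simp_all

private lemma pow_sum {ι : Type*} [DecidableEq ι] (s : Finset ι) (r : ℝ) :
    ∑ t ∈ s.powerset, r ^ t.card = (r + 1) ^ s.card := by
  have := Finset.prod_add (fun _ : ι => r) (fun _ : ι => (1:ℝ)) s
  simpa using this.symm

private lemma sum_between {m : ℕ} (T X : Finset (Fin m)) (hTX : T ⊆ X)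
    (F : Finset (Fin m) → ℝ) :
    ∑ S ∈ univ.filter (fun S => T ⊆ S ∧ S ⊆ X), F S = ∑ U ∈ (X \ T).powerset, F (T ∪ U) := by
  apply Finset.sum_nbij' (i := fun S => S \ T) (j := fun U => T ∪ U)
  · intro S hS
    simp only [mem_filter, mem_univ, true_and] at hS
    simp only [Finset.mem_powerset]
    exact Finset.sdiff_subset_sdiff hS.2 (le_refl T)
  · intro U hU
    simp only [Finset.mem_powerset] at hU
    simp only [mem_filter, mem_univ, true_and]
    exact ⟨Finset.subset_union_left, Finset.union_subset hTX (hU.trans Finset.sdiff_subset)⟩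
  · intro S hS
    simp only [mem_filter, mem_univ, true_and] at hS
    exact Finset.union_sdiff_of_subset hS.1
  · intro U hU
    simp only [Finset.mem_powerset] at hU
    exact Finset.union_sdiff_cancel_left (Finset.disjoint_left.mpr
      (fun a ha hb => (Finset.mem_sdiff.mp (hU hb)).2 ha))
  · intro S hS
    simp only [mem_filter, mem_univ, true_and] at hS
    rw [Finset.union_sdiff_of_subset hS.1]

private lemma card_union_sub {m : ℕ} (T : Finset (Fin m)) {X U : Finset (Fin m)}
    (hU : U ∈ (X \ T).powerset) : (T ∪ U).card - T.card = U.card := by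
  have hd : Disjoint T U := Finset.disjoint_left.mpr
    (fun a ha hb => (Finset.mem_sdiff.mp (Finset.mem_powerset.mp hU hb)).2 ha)
  rw [Finset.card_union_of_disjoint hd, Nat.add_sub_cancel_left]

private lemma key {m : ℕ} (T X : Finset (Fin m)) :
    ∑ S ∈ univ.filter (fun S => T ⊆ S ∧ S ⊆ X), (-1:ℝ)^(S.card - T.card)
      = if T = X then 1 else 0 := by
  by_cases hTX : T ⊆ X
  · rw [sum_between T X hTX]
    have : ∀ U ∈ (X \ T).powerset, (-1:ℝ)^((T ∪ U).card - T.card) = (-1:ℝ)^U.card := by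
      intro U hU; rw [card_union_sub T hU]
    rw [Finset.sum_congr rfl this, pow_sum]
    have hc : X \ T = ∅ ↔ T = X := by
      rw [Finset.sdiff_eq_empty_iff_subset]
      exact ⟨fun h => Finset.Subset.antisymm hTX h, fun h => h ▸ Finset.Subset.refl _⟩
    by_cases h : T = X
    · simp [h, Finset.card_eq_zero.mpr (hc.mpr h)]
    · have : (X \ T).card ≠ 0 := fun hc0 => h (hc.mp (Finset.card_eq_zero.mp hc0))
      simp [h, zero_pow this]
  · have hfe : univ.filter (fun S => T ⊆ S ∧ S ⊆ X) = ∅ := by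
      apply Finset.filter_false_of_mem
      intro S _ ⟨h1, h2⟩
      exact hTX (h1.trans h2)
    have hne : T ≠ X := fun h => hTX (h ▸ Finset.Subset.refl _)
    simp [hfe, hne]

private lemma momentOf_eq {m : ℕ} (A : (Fin m → Bool) → ℝ) (S : Finset (Fin m)) :
    momentOf A S = ∑ x : Fin m → Bool, if S ⊆ suppF x then A x else 0 := by
  rw [momentOf, Finset.sum_filter]
  apply Finset.sum_congr rfl
  intro x _
  congr 1
  simp only [eq_iff_iff]
  constructor
  · intro h i hi; simp [suppF, h i hi]
  · intro h i hi; have := h hi; simpa [suppF] using this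

private lemma inv_lemma {m : ℕ} (A : (Fin m → Bool) → ℝ) (y : Fin m → Bool) :
    ∑ S ∈ univ.filter (fun S => suppF y ⊆ S),
      (-1:ℝ)^(S.card - (suppF y).card) * momentOf A S = A y := by
  set T := suppF y with hT
  calc ∑ S ∈ univ.filter (fun S => T ⊆ S), (-1:ℝ)^(S.card - T.card) * momentOf A S
      = ∑ S ∈ univ.filter (fun S => T ⊆ S), ∑ x : Fin m → Bool,
          (if S ⊆ suppF x then (-1:ℝ)^(S.card - T.card) * A x else 0) := by
        apply Finset.sum_congr rfl
        intro S _
        rw [momentOf_eq, Finset.mul_sum]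
        apply Finset.sum_congr rfl
        intro x _
        rw [mul_ite, mul_zero]
    _ = ∑ x : Fin m → Bool, ∑ S ∈ univ.filter (fun S => T ⊆ S),
          (if S ⊆ suppF x then (-1:ℝ)^(S.card - T.card) * A x else 0) := Finset.sum_comm
    _ = ∑ x : Fin m → Bool,
          (∑ S ∈ univ.filter (fun S => T ⊆ S ∧ S ⊆ suppF x), (-1:ℝ)^(S.card - T.card)) * A x := by
        apply Finset.sum_congr rfl
        intro x _
        rw [Finset.sum_mul, ← Finset.sum_filter, Finset.filter_filter]
    _ = ∑ x : Fin m → Bool, (if T = suppF x then 1 else 0) * A x := by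
        apply Finset.sum_congr rfl
        intro x _
        rw [key]
    _ = ∑ x : Fin m → Bool, (if y = x then A x else 0) := by
        apply Finset.sum_congr rfl
        intro x _
        by_cases h : T = suppF x
        · rw [if_pos h, if_pos (suppF_inj h), one_mul]
        · rw [if_neg h, if_neg (fun he => h (by rw [hT, he])), zero_mul]
    _ = A y := by simp

private lemma momentOf_univ {m : ℕ} (A : (Fin m → Bool) → ℝ) :
    momentOf A Finset.univ = A (fun _ => true) := by
  rw [momentOf]
  have h : Finset.univ.filter (fun x : Fin m → Bool => ∀ i ∈ Finset.univ, x i = true)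
      = {fun _ => true} := by
    ext x
    simp only [mem_filter, mem_univ, true_and, Finset.mem_singleton]
    constructor
    · intro h; funext i; exact h i trivial
    · intro h i _; rw [h]
  rw [h, Finset.sum_singleton]

private lemma sumS {m : ℕ} (T : Finset (Fin m)) :
    ∑ S ∈ univ.filter (fun S => T ⊆ S), (-1:ℝ)^(S.card - T.card) * (1/2:ℝ)^S.card
      = (1/2:ℝ)^m := by
  have hfil : univ.filter (fun S : Finset (Fin m) => T ⊆ S)
      = univ.filter (fun S => T ⊆ S ∧ S ⊆ Finset.univ) := by
    apply Finset.filter_congr; intro S _; simp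
  rw [hfil, sum_between T Finset.univ (Finset.subset_univ T)]
  have : ∀ U ∈ (Finset.univ \ T).powerset,
      (-1:ℝ)^((T ∪ U).card - T.card) * (1/2:ℝ)^(T ∪ U).card
        = (1/2:ℝ)^T.card * (-1/2:ℝ)^U.card := by
    intro U hU
    have h1 := card_union_sub T hU
    have hd : Disjoint T U := Finset.disjoint_left.mpr
      (fun a ha hb => (Finset.mem_sdiff.mp (Finset.mem_powerset.mp hU hb)).2 ha)
    rw [h1, Finset.card_union_of_disjoint hd, pow_add,
      show (-1/2:ℝ) = (-1) * (1/2) by norm_num, mul_pow]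
    ring
  rw [Finset.sum_congr rfl this, ← Finset.mul_sum, pow_sum]
  have hcard : (Finset.univ \ T).card = m - T.card := by
    rw [Finset.card_sdiff_of_subset (Finset.subset_univ T), Finset.card_univ, Fintype.card_fin]
  have hle : T.card ≤ m := by
    simpa using Finset.card_le_card (Finset.subset_univ T)
  rw [hcard]
  norm_num
  rw [← pow_add, Nat.add_sub_cancel' hle]

private lemma pointwise {m : ℕ} (A : (Fin m → Bool) → ℝ)
    (hA : ∀ S : Finset (Fin m), S.card < m → momentOf A S = (1/2 : ℝ) ^ S.card)
    (y : Fin m → Bool) :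
    A y = (1/2:ℝ)^m
      + (-1:ℝ)^(m - (suppF y).card) * (A (fun _ => true) - (1/2:ℝ)^m) := by
  set T := suppF y with hT
  clear_value T
  have hmem : Finset.univ ∈ univ.filter (fun S : Finset (Fin m) => T ⊆ S) := by
    simp
  have h1 := inv_lemma A y
  rw [← hT] at h1
  rw [← Finset.sum_erase_add _ _ hmem] at h1
  have hcu : (Finset.univ : Finset (Fin m)).card = m := by
    rw [Finset.card_univ, Fintype.card_fin]
  have h2 : ∀ S ∈ (univ.filter (fun S : Finset (Fin m) => T ⊆ S)).erase Finset.univ,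
      (-1:ℝ)^(S.card - T.card) * momentOf A S
        = (-1:ℝ)^(S.card - T.card) * (1/2:ℝ)^S.card := by
    intro S hS
    have hne := Finset.ne_of_mem_erase hS
    have hlt : S.card < m := by
      have := Finset.card_lt_card (Finset.ssubset_univ_iff.mpr hne)
      omega
    rw [hA S hlt]
  rw [Finset.sum_congr rfl h2] at h1
  have h3 := sumS T
  rw [← Finset.sum_erase_add _ _ hmem, hcu] at h3
  rw [momentOf_univ, hcu] at h1
  linear_combination h3 - h1

private lemma sumSq {m : ℕ} (hm : 1 ≤ m) (A : (Fin m → Bool) → ℝ)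
    (hA1 : ∑ x, A x = 1)
    (hA : ∀ S : Finset (Fin m), S.card < m → momentOf A S = (1/2 : ℝ) ^ S.card) :
    ∑ y : Fin m → Bool, (A y)^2
      = (1/2:ℝ)^m + (A (fun _ => true) - (1/2:ℝ)^m)^2 * 2^m := by
  set c : ℝ := (1/2:ℝ)^m with hc
  set d : ℝ := A (fun _ => true) - c with hd
  have hp : ∀ y, A y = c + (-1:ℝ)^(m - (suppF y).card) * d := fun y => pointwise A hA y
  have hcard : (Finset.univ : Finset (Fin m → Bool)).card = 2^m := by
    simp [Finset.card_univ]
  have hone : (2:ℝ)^m * c = 1 := by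
    rw [hc, one_div, inv_pow, mul_inv_cancel₀ (by positivity)]
  have heps : ∀ y : Fin m → Bool, ((-1:ℝ)^(m - (suppF y).card))^2 = 1 := by
    intro y
    rw [← pow_mul]
    exact Even.neg_one_pow ⟨m - (suppF y).card, by ring⟩
  -- sum of epsilons times d is zero
  have hS1 : (∑ y : Fin m → Bool, (-1:ℝ)^(m - (suppF y).card)) * d = 0 := by
    have h0 : ∑ y : Fin m → Bool, A y
        = (2:ℝ)^m * c + (∑ y : Fin m → Bool, (-1:ℝ)^(m - (suppF y).card)) * d := by
      rw [Finset.sum_congr rfl (fun y _ => hp y), Finset.sum_add_distrib,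
        Finset.sum_const, hcard, Finset.sum_mul]
      push_cast
      ring
    rw [hA1, hone] at h0
    linarith
  have hexp : ∑ y : Fin m → Bool, (A y)^2
      = (2:ℝ)^m * (c^2 + d^2)
        + (2*c*d) * (∑ y : Fin m → Bool, (-1:ℝ)^(m - (suppF y).card)) := by
    have hy : ∀ y : Fin m → Bool, (A y)^2
        = (c^2 + d^2) + (2*c*d) * (-1:ℝ)^(m - (suppF y).card) := by
      intro y
      have he := heps y
      rw [hp y]
      nlinarith [he]
    rw [Finset.sum_congr rfl (fun y _ => hy y), Finset.sum_add_distrib,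
      Finset.sum_const, hcard, ← Finset.mul_sum]
    push_cast
    ring
  rw [hexp]
  linear_combination c * hone + 2*c*hS1

private def splitEquiv {n m : ℕ} (I : Finset (Fin n)) (hI : I.card = m) :
    ((Fin m → Bool) × ({i : Fin n // i ∉ I} → Bool)) ≃ (Fin n → Bool) where
  toFun p := fun i => if h : i ∈ I then p.1 ((I.orderIsoOfFin hI).symm ⟨i, h⟩) else p.2 ⟨i, h⟩
  invFun x := (fun t => x ((I.orderIsoOfFin hI t) : Fin n), fun i => x i.1)
  left_inv p := by
    ext t
    · have h : ((I.orderIsoOfFin hI t) : Fin n) ∈ I := (I.orderIsoOfFin hI t).2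
      simp only [dif_pos h]
      congr 1
      have heta : (⟨((I.orderIsoOfFin hI t) : Fin n), h⟩ : {x // x ∈ I})
          = I.orderIsoOfFin hI t := Subtype.ext rfl
      rw [heta]
      rw [(I.orderIsoOfFin hI).symm_apply_apply t]
    · simp only [dif_neg t.2]
  right_inv x := by
    funext i
    by_cases h : i ∈ I
    · simp only [dif_pos h]
      congr 1
      have := (I.orderIsoOfFin hI).apply_symm_apply ⟨i, h⟩
      exact congrArg Subtype.val this
    · simp only [dif_neg h]

private lemma embed_sum {n m : ℕ} (hmn : m ≤ n) (I : Finset (Fin n)) (hI : I.card = m)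
    (F : (Fin m → Bool) → ℝ) :
    ∑ x : Fin n → Bool, F (fun t => x (I.orderIsoOfFin hI t).1)
      = 2^(n-m) * ∑ y : Fin m → Bool, F y := by
  rw [← Equiv.sum_comp (splitEquiv I hI) (fun x => F (fun t => x (I.orderIsoOfFin hI t).1))]
  have hval : ∀ (p : (Fin m → Bool) × ({i : Fin n // i ∉ I} → Bool)),
      F (fun t => (splitEquiv I hI) p (I.orderIsoOfFin hI t).1) = F p.1 := by
    intro p
    congr 1
    funext t
    have h : ((I.orderIsoOfFin hI t) : Fin n) ∈ I := (I.orderIsoOfFin hI t).2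
    show (if h : _ ∈ I then _ else _) = _
    rw [dif_pos h]
    congr 1
    have heta : (⟨((I.orderIsoOfFin hI t) : Fin n), h⟩ : {x // x ∈ I})
        = I.orderIsoOfFin hI t := Subtype.ext rfl
    rw [heta]
    rw [(I.orderIsoOfFin hI).symm_apply_apply t]
  rw [Finset.sum_congr rfl (fun p _ => hval p), Fintype.sum_prod_type]
  have hcard : Fintype.card ({i : Fin n // i ∉ I} → Bool) = 2^(n-m) := by
    rw [Fintype.card_fun, Fintype.card_bool]
    congr 1
    rw [Fintype.card_subtype_compl, Fintype.card_fin, Fintype.card_coe, hI]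
  simp only [Prod.fst]
  simp only [Finset.sum_const, Finset.card_univ, hcard, nsmul_eq_mul]
  rw [← Finset.mul_sum]
  push_cast
  ring

/-- if `A` matches the uniform distribution on all moments of degree `< m`,
then `Σ_x D_I(x)² = 2^{-n}·(1 + δ(A)²·4^m)` with `δ(A) = A(1,…,1) − 2^{-m}`, i.e. the
chi-squared divergence `χ²(D_I, U_n)` equals `δ(A)²·4^m`. -/
theorem stmt_13 (n m : ℕ) (hm : 1 ≤ m) (hmn : m ≤ n)
    (A : (Fin m → Bool) → ℝ) (hA0 : ∀ x, 0 ≤ A x) (hA1 : ∑ x, A x = 1)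
    (hA : ∀ S : Finset (Fin m), S.card < m → momentOf A S = (1/2 : ℝ) ^ S.card)
    (I : Finset (Fin n)) (hI : I.card = m) :
    ∑ x : Fin n → Bool, (embedDensity A I hI x) ^ 2
      = (1/2 : ℝ) ^ n * (1 + (A (fun _ => true) - (1/2 : ℝ) ^ m) ^ 2 * 4 ^ m) := by
  have hstep : ∑ x : Fin n → Bool, (embedDensity A I hI x) ^ 2
      = (∑ x : Fin n → Bool, (A (fun t => x (I.orderIsoOfFin hI t).1))^2)
        * ((1/2:ℝ)^(n-m))^2 := by
    rw [Finset.sum_mul]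
    apply Finset.sum_congr rfl
    intro x _
    rw [embedDensity, mul_pow]
  rw [hstep, embed_sum hmn I hI (fun y => (A y)^2), sumSq hm A hA1 hA]
  set d : ℝ := A (fun _ => true) - (1/2:ℝ)^m with hd
  have hone : ((1/2:ℝ))^m * 2^m = 1 := by
    rw [one_div, inv_pow, inv_mul_cancel₀ (by positivity)]
  have honem : ((1/2:ℝ))^(n-m) * 2^(n-m) = 1 := by
    rw [one_div, inv_pow, inv_mul_cancel₀ (by positivity)]
  have hn : ((1/2:ℝ))^n = (1/2)^(n-m) * (1/2)^m := by
    rw [← pow_add, Nat.sub_add_cancel hmn]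
  have h4 : (4:ℝ)^m = 2^m * 2^m := by
    rw [show (4:ℝ) = 2*2 by norm_num, mul_pow]
  rw [hn, h4]
  linear_combination ((1/2:ℝ)^(n-m) * ((1/2:ℝ)^m + d^2*2^m)) * honem
    - ((1/2:ℝ)^(n-m) * d^2 * 2^m) * hone
end
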